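/- arXiv:1905.01915 — 4 statements merged into one kernel-verified Lean document; each statement's English description precedes it below -/
import Mathlib

section
/- Let V be a real inner product space and f_1, ..., f_n ∈ V. The open cone C^o(f_1,...,f_n) = {λ_1 f_1 + ... + λ_n f_n : λ_i > 0 for all i} is closed (as a subset of V) if and only if 0 ∈ C^o(f_1,...,f_n). -/
/-!
Adding a large multiple of a strictly positive relation `∑ μᵢ fᵢ = 0` to any linear combination
makes all its coefficients positive, so once `0` lies in the open cone the cone is the whole span
of the `fᵢ`, a finite-dimensional and hence closed subspace. Conversely `t • ∑ fᵢ` lies in the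
cone for every `t > 0` and tends to `0` as `t → 0⁺`.
-/

open Finset Filter Topology

section OpenCone

variable {𝕜 M ι : Type*} [Fintype ι]

section Semiring

variable (𝕜) [Semiring 𝕜] [PartialOrder 𝕜] [AddCommMonoid M] [Module 𝕜 M]

def openCone (f : ι → M) : Set M :=
  {v | ∃ lam : ι → 𝕜, (∀ i, 0 < lam i) ∧ v = ∑ i, lam i • f i}

variable {𝕜} {f : ι → M}

theorem smul_sum_mem_openCone {t : 𝕜} (ht : 0 < t) : t • ∑ i, f i ∈ openCone 𝕜 f :=
  ⟨fun _ => t, fun _ => ht, smul_sum⟩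

theorem openCone_subset_span : openCone 𝕜 f ⊆ Submodule.span 𝕜 (Set.range f) := by
  rintro _ ⟨lam, -, rfl⟩
  exact Submodule.sum_mem _ fun i _ => Submodule.smul_mem _ _ (Submodule.subset_span ⟨i, rfl⟩)

end Semiring

section Field

variable [Field 𝕜] [LinearOrder 𝕜] [IsStrictOrderedRing 𝕜]

theorem exists_forall_pos_add_mul (c : ι → 𝕜) {μ : ι → 𝕜} (hμ : ∀ i, 0 < μ i) :
    ∃ t : 𝕜, ∀ i, 0 < c i + t * μ i := by
  have hlim (i : ι) : Tendsto (fun t => c i + t * μ i) atTop atTop :=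
    tendsto_atTop_add_const_left _ (c i) (tendsto_id.atTop_mul_const (hμ i))
  exact (eventually_all.2 fun i => (hlim i).eventually_gt_atTop 0).exists

theorem openCone_eq_span_of_zero_mem [AddCommGroup M] [Module 𝕜 M] {f : ι → M}
    (h0 : (0 : M) ∈ openCone 𝕜 f) : openCone 𝕜 f = Submodule.span 𝕜 (Set.range f) := by
  refine openCone_subset_span.antisymm fun v hv => ?_
  obtain ⟨μ, hμ, hμf⟩ := h0
  obtain ⟨c, rfl⟩ := (Submodule.mem_span_range_iff_exists_fun 𝕜).mp hv
  obtain ⟨t, ht⟩ := exists_forall_pos_add_mul c hμ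
  refine ⟨fun i => c i + t * μ i, ht, ?_⟩
  simp only [add_smul, mul_smul, sum_add_distrib, ← smul_sum, ← hμf, smul_zero, add_zero]

end Field

theorem zero_mem_openCone_of_isClosed [AddCommMonoid M] [TopologicalSpace M] [Module ℝ M]
    [ContinuousSMul ℝ M] {f : ι → M} (hC : IsClosed (openCone ℝ f)) : (0 : M) ∈ openCone ℝ f := by
  have hlim : Tendsto (fun t : ℝ => t • ∑ i, f i) (𝓝[>] 0) (𝓝 0) := by
    simpa using (tendsto_id.smul_const (∑ i, f i)).mono_left (nhdsWithin_le_nhds (a := (0 : ℝ)))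
  exact hC.mem_of_tendsto hlim (eventually_nhdsWithin_of_forall fun _ ht => smul_sum_mem_openCone ht)

end OpenCone

theorem openCone_isClosed_iff_zero_mem_general
    (V : Type*) [NormedAddCommGroup V] [InnerProductSpace ℝ V]
    (n : ℕ) (f : Fin n → V) :
    IsClosed {v : V | ∃ lam : Fin n → ℝ, (∀ i, 0 < lam i) ∧ v = ∑ i, lam i • f i} ↔
      (0 : V) ∈ {v : V | ∃ lam : Fin n → ℝ, (∀ i, 0 < lam i) ∧ v = ∑ i, lam i • f i} := by
  change IsClosed (openCone ℝ f) ↔ 0 ∈ openCone ℝ f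
  refine ⟨zero_mem_openCone_of_isClosed, fun h0 => ?_⟩
  rw [openCone_eq_span_of_zero_mem h0]
  have := FiniteDimensional.span_of_finite ℝ (Set.finite_range f)
  exact (Submodule.span ℝ (Set.range f)).closed_of_finiteDimensional

/-- The open cone `C^o(f_1,...,f_n)` of strictly positive combinations is closed
if and only if `0` belongs to it. -/
theorem openCone_isClosed_iff_zero_mem
    (V : Type*) [NormedAddCommGroup V] [InnerProductSpace ℝ V] [FiniteDimensional ℝ V]
    (n : ℕ) (f : Fin n → V) :
    IsClosed {v : V | ∃ lam : Fin n → ℝ, (∀ i, 0 < lam i) ∧ v = ∑ i, lam i • f i} ↔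
      (0 : V) ∈ {v : V | ∃ lam : Fin n → ℝ, (∀ i, 0 < lam i) ∧ v = ∑ i, lam i • f i} :=
  openCone_isClosed_iff_zero_mem_general V n f
end

section
/- Let F be an exposed proper face of the finitely generated cone C(f_1,...,f_n) in a real inner product space V. Then there exists u ∈ V \ {0} such that F = {x ∈ C(f_1,...,f_n) : ⟨x,u⟩ = 0 and ⟨y,u⟩ ≤ 0 for all y ∈ C(f_1,...,f_n)}; moreover F = C(f_{j_1},...,f_{j_s}) where J = {j : ⟨f_j,u⟩ = 0}. In particular F is itself a finitely generated cone. -/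
open RealInnerProductSpace Finset

/-- An exposed proper face `F` of a finitely generated cone `C(f_1,...,f_n)` is cut out by a
nonzero `u` with maximum value `0` on the cone, and `F` is the cone generated by the `f_j`
orthogonal to `u`; in particular `F` is a finitely generated cone. -/
theorem exposed_face_of_cone
    (V : Type*) [NormedAddCommGroup V] [InnerProductSpace ℝ V] [FiniteDimensional ℝ V]
    (n : ℕ) (f : Fin n → V)
    (C : Set V) (hC : C = {v : V | ∃ lam : Fin n → ℝ, (∀ i, 0 ≤ lam i) ∧ v = ∑ i, lam i • f i})
    (F : Set V) (hFexp : IsExposed ℝ C F) (hFne : F.Nonempty) (hFproper : F ≠ C) :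
    ∃ u : V, u ≠ 0 ∧
      F = {x ∈ C | ⟪x, u⟫ = 0 ∧ ∀ y ∈ C, ⟪y, u⟫ ≤ 0} ∧
      F = {v : V | ∃ lam : Fin n → ℝ, (∀ i, 0 ≤ lam i) ∧ (∀ i, ⟪f i, u⟫ ≠ 0 → lam i = 0) ∧
        v = ∑ i, lam i • f i} := by
  obtain ⟨l, hl⟩ := hFexp hFne
  set u : V := (InnerProductSpace.toDual ℝ V).symm l with hu
  have hul : ∀ x : V, ⟪x, u⟫ = l x := by
    intro x
    rw [real_inner_comm]
    exact InnerProductSpace.toDual_symm_apply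
  have h0C : (0 : V) ∈ C := by
    rw [hC]; exact ⟨0, fun i => le_refl 0, by simp⟩
  have hfC : ∀ i, f i ∈ C := by
    intro i
    rw [hC]
    refine ⟨fun j => if j = i then 1 else 0, fun j => by positivity, ?_⟩
    simp [ite_smul]
  have hsmul : ∀ x ∈ C, ∀ c : ℝ, 0 ≤ c → c • x ∈ C := by
    intro x hx c hc
    rw [hC] at hx ⊢
    obtain ⟨lam, hlam, rfl⟩ := hx
    exact ⟨fun i => c * lam i, fun i => mul_nonneg hc (hlam i),
      by rw [Finset.smul_sum]; simp [mul_smul]⟩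
  obtain ⟨x₀, hx₀⟩ := hFne
  rw [hl] at hx₀
  obtain ⟨hx₀C, hx₀max⟩ := hx₀
  have hlx₀ : l x₀ = 0 := by
    have h1 : 0 ≤ l x₀ := by simpa using hx₀max 0 h0C
    have h2 : l ((2:ℝ) • x₀) ≤ l x₀ := hx₀max _ (hsmul x₀ hx₀C 2 (by norm_num))
    rw [map_smul] at h2
    simp only [smul_eq_mul] at h2
    linarith
  have hneg : ∀ y ∈ C, l y ≤ 0 := fun y hy => hlx₀ ▸ hx₀max y hy
  have hFeq : F = {x ∈ C | l x = 0 ∧ ∀ y ∈ C, l y ≤ 0} := by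
    rw [hl]
    ext x
    constructor
    · rintro ⟨hxC, hxmax⟩
      exact ⟨hxC, le_antisymm (hneg x hxC) (by simpa using hxmax 0 h0C), hneg⟩
    · rintro ⟨hxC, hx0, -⟩
      exact ⟨hxC, fun y hy => by rw [hx0]; exact hneg y hy⟩
  have hune : u ≠ 0 := by
    intro h
    apply hFproper
    have hl0 : l = 0 := by
      have h2 : (InnerProductSpace.toDual ℝ V) u = l := by
        rw [hu]; simp
      rw [h] at h2; rw [← h2]; simp
    rw [hl, hl0]
    ext x; simp
  refine ⟨u, hune, ?_, ?_⟩
  · rw [hFeq]; ext x; simp only [Set.mem_setOf_eq, hul]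
  · rw [hFeq]
    ext x
    simp only [Set.mem_setOf_eq, hul]
    constructor
    · rintro ⟨hxC, hx0, -⟩
      rw [hC] at hxC
      obtain ⟨lam, hlam, rfl⟩ := hxC
      have hsum : ∑ i, lam i * l (f i) = 0 := by
        rw [← hx0]; simp [map_sum]
      have hterm : ∀ i ∈ Finset.univ, lam i * l (f i) ≤ 0 :=
        fun i _ => mul_nonpos_of_nonneg_of_nonpos (hlam i) (hneg _ (hfC i))
      have hzero := (Finset.sum_eq_zero_iff_of_nonpos hterm).mp hsum
      refine ⟨lam, hlam, fun i hi => ?_, rfl⟩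
      have hz := hzero i (Finset.mem_univ i)
      rcases mul_eq_zero.mp hz with h | h
      · exact h
      · exact absurd h hi
    · rintro ⟨lam, hlam, hlam0, rfl⟩
      have hxC : (∑ i, lam i • f i) ∈ C := by rw [hC]; exact ⟨lam, hlam, rfl⟩
      refine ⟨hxC, ?_, hneg⟩
      rw [map_sum]
      apply Finset.sum_eq_zero
      intro i _
      rw [map_smul, smul_eq_mul]
      by_cases h : l (f i) = 0
      · simp [h]
      · simp [hlam0 i h]
end

section
/- Let V be a finite-dimensional real inner product space and f : V → ℝ a convex function. If for every ξ ∈ V \ {0} the maximal weight λ_f(ξ) = lim_{t→+∞} d/dt f(tξ) is strictly positive, then f is an exhaustion function (f(v) → ∞ as ‖v‖ → ∞), and consequently f attains a global minimum. -/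
/-!
Along each ray the derivative is eventually at least `c > 0`, so `f` grows at least linearly
there. Convexity makes the sets `{η ∈ S¹ | f 0 + 1 < f (R • η)}` increase with `R`, so by
compactness of the unit sphere a single radius `R` works for every direction, and then convexity
again gives `f v ≥ f 0 + ‖v‖ / R` for `‖v‖ ≥ R`.
-/

open Filter Set Metric Bornology

theorem tendsto_atTop_of_le_deriv {g : ℝ → ℝ} (hg : Differentiable ℝ g) {c T : ℝ} (hc : 0 < c)
    (hderiv : ∀ t ≥ T, c ≤ deriv g t) : Tendsto g atTop atTop := by
  have hlin : ∀ t ≥ T, g T + c * (t - T) ≤ g t := by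
    intro t ht
    have := (convex_Ici T).mul_sub_le_image_sub_of_le_deriv hg.continuous.continuousOn
      hg.differentiableOn
      (fun x hx => hderiv x <| le_of_lt <| by simpa only [interior_Ici, mem_Ioi] using hx)
      T self_mem_Ici t ht ht
    linarith
  refine tendsto_atTop_mono' _ (eventually_ge_atTop T |>.mono hlin) ?_
  exact tendsto_atTop_add_const_left _ _
    ((tendsto_atTop_add_const_right _ _ tendsto_id).const_mul_atTop hc)

section Convex

variable {E : Type*} [NormedAddCommGroup E] [NormedSpace ℝ E] {f : E → ℝ}

theorem ConvexOn.comp_toSpanSingleton (hf : ConvexOn ℝ univ f) (ξ : E) :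
    ConvexOn ℝ univ fun t : ℝ => f (t • ξ) :=
  hf.comp_linearMap (LinearMap.toSpanSingleton ℝ E ξ)

theorem ConvexOn.continuous_of_univ [FiniteDimensional ℝ E] (hf : ConvexOn ℝ univ f) :
    Continuous f :=
  continuousOn_univ.mp (hf.continuousOn isOpen_univ)

theorem ConvexOn.map_zero_add_norm_div_le (hf : ConvexOn ℝ univ f) {R : ℝ} (hR : 0 < R)
    (hsphere : ∀ η ∈ sphere (0 : E) 1, f 0 + 1 < f (R • η)) {v : E} (hv : R ≤ ‖v‖) :
    f 0 + ‖v‖ / R ≤ f v := by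
  have hv0 : 0 < ‖v‖ := hR.trans_le hv
  set η := ‖v‖⁻¹ • v
  have hη : η ∈ sphere (0 : E) 1 := by
    simp [η, norm_smul, hv0.ne']
  have hslope := (hf.comp_toSpanSingleton η).secant_mono (mem_univ 0) (mem_univ R) (mem_univ ‖v‖)
    hR.ne' hv0.ne' hv
  have hηv : ‖v‖ • η = v := by simp [η, smul_smul, hv0.ne']
  simp only [zero_smul, sub_zero, hηv] at hslope
  have hR1 : 1 / R < (f (R • η) - f 0) / R := by
    gcongr; linarith [hsphere η hη]
  have hgrowth := (hR1.trans_le hslope).le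
  rw [div_le_div_iff₀ hR hv0] at hgrowth
  rw [← le_sub_iff_add_le', div_le_iff₀ hR]
  linarith

theorem ConvexOn.exists_radius_forall_sphere_lt [FiniteDimensional ℝ E] (hf : ConvexOn ℝ univ f)
    (hray : ∀ ξ ≠ (0 : E), Tendsto (fun t : ℝ => f (t • ξ)) atTop atTop) :
    ∃ R > (0 : ℝ), ∀ η ∈ sphere (0 : E) 1, f 0 + 1 < f (R • η) := by
  set U : ℕ → Set E := fun n => {η | f 0 + 1 < f (((n : ℝ) + 1) • η)}
  have hopen (n : ℕ) : IsOpen (U n) :=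
    isOpen_lt continuous_const (hf.continuous_of_univ.comp (continuous_const_smul _))
  have hmono : Monotone U := by
    intro n m hnm η hη
    have hbase : f ((0 : ℝ) • η) ≤ f (((n : ℝ) + 1) • η) := by
      rw [zero_smul]; exact (lt_add_one _).le.trans hη.le
    exact hη.trans_le <| (hf.comp_toSpanSingleton η).le_right_of_left_le'' (mem_univ 0) (mem_univ _)
      (by positivity) (by gcongr) hbase
  have hcover : sphere (0 : E) 1 ⊆ ⋃ n, U n := by
    intro η hη
    have hlim := (hray η (ne_zero_of_mem_sphere one_ne_zero ⟨η, hη⟩)).comp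
      (tendsto_atTop_add_const_right _ 1 tendsto_natCast_atTop_atTop)
    exact mem_iUnion.2 (hlim.eventually_gt_atTop (f 0 + 1)).exists
  obtain ⟨N, hN⟩ :=
    (isCompact_sphere (0 : E) 1).elim_directed_cover U hopen hcover hmono.directed_le
  exact ⟨(N : ℝ) + 1, by positivity, fun η hη => hN hη⟩

theorem ConvexOn.tendsto_cobounded_atTop [FiniteDimensional ℝ E] (hf : ConvexOn ℝ univ f)
    (hray : ∀ ξ ≠ (0 : E), Tendsto (fun t : ℝ => f (t • ξ)) atTop atTop) :
    Tendsto f (cobounded E) atTop := by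
  obtain ⟨R, hR, hsphere⟩ := hf.exists_radius_forall_sphere_lt hray
  refine tendsto_atTop_mono' _ ?_
    (tendsto_atTop_add_const_left _ (f 0) (tendsto_norm_cobounded_atTop.atTop_div_const hR))
  filter_upwards [tendsto_norm_cobounded_atTop.eventually_ge_atTop R] with v hv
    using hf.map_zero_add_norm_div_le hR hsphere hv

end Convex

/-- If `f : V → ℝ` is convex and for every nonzero direction `ξ` the maximal weight
`λ_f(ξ) = lim_{t → ∞} (d/dt) f(tξ)` is strictly positive, then `f` is an exhaustion
(it tends to `+∞` at infinity) and attains a global minimum. -/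
theorem convex_exhaustion_of_positive_maximal_weights
    (V : Type*) [NormedAddCommGroup V] [InnerProductSpace ℝ V] [FiniteDimensional ℝ V]
    (f : V → ℝ) (hconv : ConvexOn ℝ Set.univ f)
    (hdiff : ∀ (ξ : V) (t : ℝ), DifferentiableAt ℝ (fun s : ℝ => f (s • ξ)) t)
    (hpos : ∀ ξ : V, ξ ≠ 0 → ∃ c > (0 : ℝ), ∃ T : ℝ, ∀ t ≥ T,
      c ≤ deriv (fun s : ℝ => f (s • ξ)) t) :
    Tendsto f (Bornology.cobounded V) atTop ∧ ∃ v : V, ∀ w : V, f v ≤ f w := by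
  have hexhaustion : Tendsto f (cobounded V) atTop := hconv.tendsto_cobounded_atTop fun ξ hξ => by
    obtain ⟨c, hc, T, hT⟩ := hpos ξ hξ
    exact tendsto_atTop_of_le_deriv (hdiff ξ) hc hT
  exact ⟨hexhaustion, hconv.continuous_of_univ.exists_forall_le (by rwa [← cobounded_eq_cocompact])⟩
end

section
/- Let 𝔞 be an abelian algebra of symmetric endomorphisms of V, diagonalized with weights α_1,...,α_n in an orthonormal eigenbasis v_1,...,v_n. Let x = ∑_{i∈I} x_i v_i with x_i ≠ 0 for i ∈ I (I the support of x). Then the gradient map μ_𝔞 maps the orbit A·x = {exp(ξ)x : ξ ∈ 𝔞} onto the open cone C^o_I = {∑_{i∈I} s_i α_i : s_i > 0}, and this map A·x → C^o_I is a bijection (in fact a diffeomorphism). -/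
open RealInnerProductSpace Finset Classical Filter

/-! In the eigenbasis, `⟪exp ξ x, v i⟫ = e^{α_i(ξ)} x_i`, so on the orbit
`μ_𝔞(exp ξ x) = ∑_{i ∈ I} e^{2α_i(ξ)} x_i² α_i`, the gradient of `ξ ↦ ½ ∑ x_i² e^{2α_i(ξ)}`.
Injectivity is the strict monotonicity of this gradient: pairing with `ξ - ξ'` gives a sum of
terms `(e^{2a} - e^{2b})(a - b) x_i² ≥ 0`. For surjectivity onto `∑ s_i α_i`, the coercive function
`a ↦ ∑_{i ∈ I} (x_i² e^{a_i} - s_i a_i)` attains its minimum on the subspace `{(α_i(ξ))_{i ∈ I}}`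
of `ℝ^I`, and the first-order condition there says `μ_𝔞(exp (ξ/2) x) = ∑ s_i α_i`. -/

theorem NormedSpace.exp_apply_of_apply_eq_smul {E : Type*} [NormedAddCommGroup E]
    [NormedSpace ℝ E] [CompleteSpace E] {T : E →L[ℝ] E} {w : E} {c : ℝ} (h : T w = c • w) :
    NormedSpace.exp T w = Real.exp c • w := by
  have hpow (k : ℕ) : (T ^ k) w = c ^ k • w := by
    induction k with
    | zero => simp
    | succ k ih => rw [pow_succ, mul_apply_eq_comp, h, map_smul, ih, smul_smul, pow_succ']
  have hT :=
    (ContinuousLinearMap.apply ℝ E w).hasSum (NormedSpace.exp_series_hasSum_exp' (𝕂 := ℝ) T)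
  have hc := (NormedSpace.exp_series_hasSum_exp' (𝕂 := ℝ) c).smul_const w
  simp only [ContinuousLinearMap.apply_apply, smul_apply, hpow, smul_smul] at hT hc
  rw [Real.exp_eq_exp_ℝ]
  exact hT.unique hc

namespace OrthonormalBasis

variable {ι V : Type*} [Fintype ι] [NormedAddCommGroup V] [InnerProductSpace ℝ V]
  (v : OrthonormalBasis ι ℝ V)

theorem inner_apply_of_apply_eq_smul {T : V →L[ℝ] V} {c : ι → ℝ}
    (hT : ∀ i, T (v i) = c i • v i) (y : V) (i : ι) :
    ⟪T y, v i⟫ = c i * ⟪y, v i⟫ := by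
  conv_lhs => rw [← v.sum_repr' y]
  simp only [map_sum, map_smul, hT, smul_smul, sum_inner, real_inner_smul_left,
    orthonormal_iff_ite.mp v.orthonormal, mul_ite, mul_one, mul_zero, sum_ite_eq', mem_univ,
    if_true]
  rw [real_inner_comm, mul_comm]

theorem inner_apply_self_of_apply_eq_smul {T : V →L[ℝ] V} {c : ι → ℝ}
    (hT : ∀ i, T (v i) = c i • v i) (y : V) :
    ⟪T y, y⟫ = ∑ i, c i * ⟪y, v i⟫ ^ 2 := by
  rw [← v.sum_inner_mul_inner (T y) y]
  refine sum_congr rfl fun i _ => ?_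
  rw [v.inner_apply_of_apply_eq_smul hT, real_inner_comm y]
  ring

theorem inner_exp_apply_of_apply_eq_smul [CompleteSpace V] {T : V →L[ℝ] V} {c : ι → ℝ}
    (hT : ∀ i, T (v i) = c i • v i) (y : V) (i : ι) :
    ⟪NormedSpace.exp T y, v i⟫ = Real.exp (c i) * ⟪y, v i⟫ :=
  v.inner_apply_of_apply_eq_smul (fun j => NormedSpace.exp_apply_of_apply_eq_smul (hT j)) y i

theorem inner_apply_exp_apply_self [CompleteSpace V] {S T : V →L[ℝ] V} {c d : ι → ℝ}
    (hT : ∀ i, T (v i) = c i • v i) (hS : ∀ i, S (v i) = d i • v i) (y : V) :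
    ⟪S (NormedSpace.exp T y), NormedSpace.exp T y⟫ =
      ∑ i, Real.exp (2 * c i) * ⟪y, v i⟫ ^ 2 * d i := by
  rw [v.inner_apply_self_of_apply_eq_smul hS]
  refine sum_congr rfl fun i _ => ?_
  rw [v.inner_exp_apply_of_apply_eq_smul hT, two_mul, Real.exp_add]
  ring

end OrthonormalBasis

theorem exists_mul_abs_sub_le_mul_exp_sub_mul {c s : ℝ} (hc : 0 < c) (hs : 0 < s) :
    ∃ K, ∀ t, s * |t| - K ≤ c * Real.exp t - s * t := by
  set u := Real.log (2 * s / c)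
  -- tangent line of `c * exp` at the point where its slope is `2 * s`
  have htangent (t : ℝ) : 2 * s * (t - u + 1) ≤ c * Real.exp t :=
    calc 2 * s * (t - u + 1) ≤ 2 * s * Real.exp (t - u) := by
          gcongr; linarith [Real.add_one_le_exp (t - u)]
      _ = c * Real.exp t := by
          rw [Real.exp_sub, Real.exp_log (by positivity)]; field_simp
  refine ⟨2 * s * |u - 1|, fun t => ?_⟩
  rcases le_total 0 t with ht | ht
  · rw [abs_of_nonneg ht]
    nlinarith [htangent t, mul_le_mul_of_nonneg_left (le_abs_self (u - 1)) hs.le]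
  · rw [abs_of_nonpos ht]
    nlinarith [Real.exp_pos t, abs_nonneg (u - 1)]

theorem tendsto_mul_exp_sub_mul_cocompact_atTop {c s : ℝ} (hc : 0 < c) (hs : 0 < s) :
    Tendsto (fun t => c * Real.exp t - s * t) (cocompact ℝ) atTop := by
  obtain ⟨K, hK⟩ := exists_mul_abs_sub_le_mul_exp_sub_mul hc hs
  exact tendsto_atTop_mono hK
    (tendsto_atTop_add_const_right _ _ (tendsto_norm_cocompact_atTop.const_mul_atTop hs))

theorem bddBelow_range_mul_exp_sub_mul {c s : ℝ} (hc : 0 < c) (hs : 0 < s) :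
    BddBelow (Set.range fun t => c * Real.exp t - s * t) := by
  obtain ⟨K, hK⟩ := exists_mul_abs_sub_le_mul_exp_sub_mul hc hs
  exact ⟨-K, by rintro _ ⟨t, rfl⟩; nlinarith [hK t, abs_nonneg t]⟩

theorem tendsto_sum_apply_cocompact_atTop {ι : Type*} [Fintype ι] {X : ι → Type*}
    [∀ i, TopologicalSpace (X i)] {f : ∀ i, X i → ℝ}
    (hf : ∀ i, Tendsto (f i) (cocompact (X i)) atTop) (hbdd : ∀ i, BddBelow (Set.range (f i))) :
    Tendsto (fun x => ∑ i, f i (x i)) (cocompact (∀ i, X i)) atTop := by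
  choose m hm using hbdd
  rw [← coprodᵢ_cocompact, Filter.coprodᵢ, tendsto_iSup]
  intro i
  have hle (x : ∀ i, X i) : f i (x i) + ∑ j ∈ univ.erase i, m j ≤ ∑ j, f j (x j) := by
    rw [← add_sum_erase _ _ (mem_univ i)]
    gcongr with j
    exact hm j ⟨x j, rfl⟩
  exact tendsto_atTop_mono hle (tendsto_atTop_add_const_right _ _ ((hf i).comp tendsto_comap))

theorem Submodule.exists_mem_forall_sum_mul_exp_mul_eq {ι : Type*} [Fintype ι] {c s : ι → ℝ}
    (hc : ∀ i, 0 < c i) (hs : ∀ i, 0 < s i) (U : Submodule ℝ (ι → ℝ)) :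
    ∃ a ∈ U, ∀ u ∈ U, ∑ i, c i * Real.exp (a i) * u i = ∑ i, s i * u i := by
  set F : (ι → ℝ) → ℝ := fun a => ∑ i, (c i * Real.exp (a i) - s i * a i)
  have hF : Tendsto F (cocompact _) atTop :=
    tendsto_sum_apply_cocompact_atTop
      (fun i => tendsto_mul_exp_sub_mul_cocompact_atTop (hc i) (hs i))
      (fun i => bddBelow_range_mul_exp_sub_mul (hc i) (hs i))
  have hFU : Tendsto (F ∘ (↑) : U → ℝ) (cocompact U) atTop :=
    hF.comp U.closed_of_finiteDimensional.isClosedEmbedding_subtypeVal.tendsto_cocompact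
  obtain ⟨⟨a, haU⟩, ha⟩ := (by fun_prop : Continuous (F ∘ (↑) : U → ℝ)).exists_forall_le hFU
  refine ⟨a, haU, fun u hu => ?_⟩
  have hmin : IsLocalMin (fun t : ℝ => F (a + t • u)) 0 :=
    Eventually.of_forall fun t => by simpa using ha ⟨a + t • u, U.add_mem haU (U.smul_mem t hu)⟩
  have hderiv :
      HasDerivAt (fun t : ℝ => F (a + t • u)) (∑ i, (c i * Real.exp (a i) - s i) * u i) 0 := by
    refine HasDerivAt.fun_sum fun i _ => ?_
    have hline : HasDerivAt (fun t : ℝ => a i + t * u i) (u i) 0 := by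
      simpa using ((hasDerivAt_id (0 : ℝ)).mul_const (u i)).const_add (a i)
    convert (hline.exp.const_mul (c i)).fun_sub (hline.const_mul (s i)) using 1
    · simp
    · simp only [zero_mul, add_zero]
      ring
  simpa only [sub_mul, sum_sub_distrib, sub_eq_zero] using hmin.hasDerivAt_eq_zero hderiv

theorem StrictMono.sub_mul_sub_pos {R : Type*} [Ring R] [LinearOrder R] [IsStrictOrderedRing R]
    {f : R → R} (hf : StrictMono f) {a b : R} (h : a ≠ b) : 0 < (f a - f b) * (a - b) := by
  rcases h.lt_or_gt with h | h
  · exact mul_pos_of_neg_of_neg (sub_neg.2 (hf h)) (sub_neg.2 h)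
  · exact mul_pos (sub_pos.2 (hf h)) (sub_pos.2 h)

section Coordinates

variable {ι E : Type*} [Fintype ι] [AddCommGroup E] [Module ℝ E] (α : ι → E →ₗ[ℝ] ℝ)

theorem eq_of_forall_sum_exp_mul_eq {w : ι → ℝ} {ξ ξ' : E}
    (h : ∀ η, ∑ i, Real.exp (2 * α i ξ) * w i ^ 2 * α i η =
      ∑ i, Real.exp (2 * α i ξ') * w i ^ 2 * α i η)
    {i : ι} (hi : w i ≠ 0) : α i ξ = α i ξ' := by
  have hmono : StrictMono fun t : ℝ => Real.exp (2 * t) :=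
    Real.exp_strictMono.comp (strictMono_mul_left_of_pos two_pos)
  set d : ι → ℝ := fun j =>
    (Real.exp (2 * α j ξ) - Real.exp (2 * α j ξ')) * (α j ξ - α j ξ') * w j ^ 2
  have hd : ∀ j, 0 ≤ d j := fun j => by
    rcases eq_or_ne (α j ξ) (α j ξ') with hj | hj
    · simp [d, hj]
    · exact mul_nonneg (hmono.sub_mul_sub_pos hj).le (sq_nonneg _)
  have hsum : ∑ j, d j = 0 := by
    have := h (ξ - ξ')
    rw [← sub_eq_zero, ← sum_sub_distrib] at this
    rw [← this]
    refine sum_congr rfl fun j _ => ?_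
    simp only [d, map_sub]
    ring
  have hdi : d i = 0 := (sum_eq_zero_iff_of_nonneg fun j _ => hd j).1 hsum i (mem_univ i)
  by_contra hne
  exact (mul_pos (hmono.sub_mul_sub_pos hne) (sq_pos_of_ne_zero hi)).ne' hdi

theorem exists_forall_sum_exp_mul_eq {w s : ι → ℝ} (hs : ∀ i, w i ≠ 0 → 0 < s i) :
    ∃ ξ : E, ∀ η, ∑ i, Real.exp (2 * α i ξ) * w i ^ 2 * α i η =
      ∑ i, (if w i ≠ 0 then s i * α i η else 0) := by
  let J := {i // w i ≠ 0}
  have hJ (f : ι → ℝ) : ∑ i, (if w i ≠ 0 then f i else 0) = ∑ j : J, f j := by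
    rw [← sum_filter]
    exact sum_subtype _ (by simp) f
  obtain ⟨_, ⟨ξ, rfl⟩, hξ⟩ :=
    (LinearMap.range (LinearMap.pi fun j : J => α j)).exists_mem_forall_sum_mul_exp_mul_eq
      (c := fun j : J => w j ^ 2) (fun j => sq_pos_of_ne_zero j.2) (fun j => hs j j.2)
  refine ⟨(2 : ℝ)⁻¹ • ξ, fun η => ?_⟩
  calc ∑ i, Real.exp (2 * α i ((2 : ℝ)⁻¹ • ξ)) * w i ^ 2 * α i η
      = ∑ i, (if w i ≠ 0 then w i ^ 2 * Real.exp (α i ξ) * α i η else 0) := by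
        refine sum_congr rfl fun i _ => ?_
        split_ifs with hi
        · rw [map_smul, smul_eq_mul, mul_inv_cancel_left₀ two_ne_zero]
          ring
        · simp [not_not.1 hi]
    _ = ∑ i, (if w i ≠ 0 then s i * α i η else 0) := by
        rw [hJ, hJ]
        simpa using hξ _ ⟨η, rfl⟩

end Coordinates

theorem gradientMap_bijOn_orbit_general
    (V : Type*) [NormedAddCommGroup V] [InnerProductSpace ℝ V] [FiniteDimensional ℝ V]
    (n : ℕ) (𝔞 : Submodule ℝ (V →L[ℝ] V))
    (v : OrthonormalBasis (Fin n) ℝ V) (α : Fin n → (𝔞 →ₗ[ℝ] ℝ))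
    (heig : ∀ (ξ : 𝔞) (i : Fin n), (ξ : V →L[ℝ] V) (v i) = α i ξ • v i)
    (x : V) :
    Set.BijOn (fun y : V => fun ξ : 𝔞 => ⟪(ξ : V →L[ℝ] V) y, y⟫)
      {y : V | ∃ ξ : 𝔞, y = NormedSpace.exp (ξ : V →L[ℝ] V) x}
      {φ : 𝔞 → ℝ | ∃ s : Fin n → ℝ, (∀ i, ⟪x, v i⟫ ≠ 0 → 0 < s i) ∧
        φ = fun ξ : 𝔞 => ∑ i, (if ⟪x, v i⟫ ≠ 0 then s i * α i ξ else 0)} := by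
  have hμ (ξ η : 𝔞) : ⟪(η : V →L[ℝ] V) (NormedSpace.exp (ξ : V →L[ℝ] V) x),
      NormedSpace.exp (ξ : V →L[ℝ] V) x⟫ = ∑ i, Real.exp (2 * α i ξ) * ⟪x, v i⟫ ^ 2 * α i η :=
    v.inner_apply_exp_apply_self (heig ξ) (heig η) x
  refine ⟨?_, ?_, ?_⟩
  · rintro _ ⟨ξ, rfl⟩
    refine ⟨fun i => Real.exp (2 * α i ξ) * ⟪x, v i⟫ ^ 2, fun i _ => by positivity,
      funext fun η => (hμ ξ η).trans (sum_congr rfl fun i _ => ?_)⟩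
    split_ifs with hi
    · ring
    · simp [not_not.1 hi]
  · rintro _ ⟨ξ, rfl⟩ _ ⟨ξ', rfl⟩ h
    refine InnerProductSpace.ext_inner_right_basis v.toBasis fun i => ?_
    simp only [OrthonormalBasis.coe_toBasis, v.inner_exp_apply_of_apply_eq_smul (heig _)]
    by_cases hi : ⟪x, v i⟫ = 0
    · simp [hi]
    · have hη (η : 𝔞) := (hμ ξ η).symm.trans ((congrFun h η).trans (hμ ξ' η))
      rw [eq_of_forall_sum_exp_mul_eq α hη hi]
  · rintro _ ⟨s, hs, rfl⟩
    obtain ⟨ξ, hξ⟩ := exists_forall_sum_exp_mul_eq α hs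
    exact ⟨_, ⟨ξ, rfl⟩, funext fun η => (hμ ξ η).trans (hξ η)⟩

/-- The gradient map `μ_𝔞`, viewed as a map into functions on `𝔞`, sends the orbit `A·x`
bijectively onto the open cone `C^o_I` generated by the weights `α_i` with `i` in the support
of `x`. -/
theorem gradientMap_bijOn_orbit
    (V : Type*) [NormedAddCommGroup V] [InnerProductSpace ℝ V] [FiniteDimensional ℝ V]
    (n : ℕ) (𝔞 : Submodule ℝ (V →L[ℝ] V))
    (habelian : ∀ ξ η : 𝔞, (ξ : V →L[ℝ] V) * η = (η : V →L[ℝ] V) * ξ)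
    (v : OrthonormalBasis (Fin n) ℝ V) (α : Fin n → (𝔞 →ₗ[ℝ] ℝ))
    (heig : ∀ (ξ : 𝔞) (i : Fin n), (ξ : V →L[ℝ] V) (v i) = α i ξ • v i)
    (x : V) :
    Set.BijOn (fun y : V => fun ξ : 𝔞 => ⟪(ξ : V →L[ℝ] V) y, y⟫)
      {y : V | ∃ ξ : 𝔞, y = NormedSpace.exp (ξ : V →L[ℝ] V) x}
      {φ : 𝔞 → ℝ | ∃ s : Fin n → ℝ, (∀ i, ⟪x, v i⟫ ≠ 0 → 0 < s i) ∧
        φ = fun ξ : 𝔞 => ∑ i, (if ⟪x, v i⟫ ≠ 0 then s i * α i ξ else 0)} :=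
  gradientMap_bijOn_orbit_general V n 𝔞 v α heig x
end
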